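/- arXiv:math/0208087 — 7 statements merged into one kernel-verified Lean document; each statement's English description precedes it below -/
import Mathlib

section
/- The norm ‖a‖ = ‖a‖_∞ + ‖a‖_ω on the algebra B₀ is submultiplicative: ‖ab‖ ≤ ‖a‖·‖b‖ for all a, b ∈ B₀; moreover ‖a*‖ = ‖a‖ and ‖1‖ = 1. -/
open Filter Topology

/-- `B₀` membership: the sequence converges and `n (a n - λ(a))` converges. -/
def MemB0 (a : ℕ → ℂ) (la : ℂ) : Prop :=
  Tendsto a atTop (𝓝 la) ∧ ∃ w, Tendsto (fun n : ℕ => (n : ℂ) * (a n - la)) atTop (𝓝 w)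

/-- The norm `‖a‖ = ‖a‖_∞ + ‖a‖_ω` on `B₀`, where `la = λ(a)`. -/
noncomputable def nrm (a : ℕ → ℂ) (la : ℂ) : ℝ :=
  (⨆ n : ℕ, ‖a n‖) + ⨆ n : ℕ, (n : ℝ) * ‖a n - la‖

/-! With `S = ‖·‖_∞` and `W = ‖·‖_ω`, the Leibniz-type splitting
`ab - λ(a)λ(b) = a (b - λ(b)) + (a - λ(a)) λ(b)` together with `|λ(b)| ≤ S(b)` gives
`S(ab) ≤ S(a) S(b)` and `W(ab) ≤ S(a) W(b) + W(a) S(b)`; adding the missing nonnegative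
term `W(a) W(b)` yields `‖ab‖ ≤ (S(a) + W(a)) (S(b) + W(b))`. -/

theorem norm_mul_sub_mul_le {R : Type*} [SeminormedRing R] (x y x' y' : R) :
    ‖x * y - x' * y'‖ ≤ ‖x‖ * ‖y - y'‖ + ‖x - x'‖ * ‖y'‖ :=
  calc ‖x * y - x' * y'‖ = ‖x * (y - y') + (x - x') * y'‖ := by noncomm_ring
    _ ≤ ‖x * (y - y')‖ + ‖(x - x') * y'‖ := norm_add_le _ _
    _ ≤ ‖x‖ * ‖y - y'‖ + ‖x - x'‖ * ‖y'‖ := add_le_add (norm_mul_le _ _) (norm_mul_le _ _)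

namespace MemB0

variable {a : ℕ → ℂ} {la : ℂ}

theorem norm_le_iSup (h : MemB0 a la) (n : ℕ) : ‖a n‖ ≤ ⨆ k : ℕ, ‖a k‖ :=
  le_ciSup h.1.norm.bddAbove_range n

theorem norm_lim_le_iSup (h : MemB0 a la) : ‖la‖ ≤ ⨆ k : ℕ, ‖a k‖ :=
  le_of_tendsto' h.1.norm h.norm_le_iSup

theorem weighted_le_iSup (h : MemB0 a la) (n : ℕ) :
    (n : ℝ) * ‖a n - la‖ ≤ ⨆ k : ℕ, (k : ℝ) * ‖a k - la‖ := by
  obtain ⟨w, hw⟩ := h.2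
  have hbdd : BddAbove (Set.range fun k : ℕ => ‖(k : ℂ) * (a k - la)‖) :=
    hw.norm.bddAbove_range
  simp only [norm_mul, Complex.norm_natCast] at hbdd
  exact le_ciSup hbdd n

end MemB0

theorem nrm_le_of_forall_le {c : ℕ → ℂ} {lc : ℂ} {S W : ℝ} (hS : ∀ n, ‖c n‖ ≤ S)
    (hW : ∀ n : ℕ, (n : ℝ) * ‖c n - lc‖ ≤ W) : nrm c lc ≤ S + W :=
  add_le_add (ciSup_le hS) (ciSup_le hW)

theorem nrm_mul_le {a b : ℕ → ℂ} {la lb : ℂ} (ha : MemB0 a la) (hb : MemB0 b lb) :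
    nrm (fun n => a n * b n) (la * lb) ≤ nrm a la * nrm b lb := by
  set Sa := ⨆ n : ℕ, ‖a n‖
  set Sb := ⨆ n : ℕ, ‖b n‖
  set Wa := ⨆ n : ℕ, (n : ℝ) * ‖a n - la‖
  set Wb := ⨆ n : ℕ, (n : ℝ) * ‖b n - lb‖
  have hSa : 0 ≤ Sa := (norm_nonneg _).trans (ha.norm_le_iSup 0)
  have hWa : 0 ≤ Wa := by simpa using ha.weighted_le_iSup 0
  have hWb : 0 ≤ Wb := by simpa using hb.weighted_le_iSup 0
  have hsup (n : ℕ) : ‖a n * b n‖ ≤ Sa * Sb := by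
    rw [norm_mul]
    exact mul_le_mul (ha.norm_le_iSup n) (hb.norm_le_iSup n) (norm_nonneg _) hSa
  have hweighted (n : ℕ) : (n : ℝ) * ‖a n * b n - la * lb‖ ≤ Sa * Wb + Wa * Sb :=
    calc (n : ℝ) * ‖a n * b n - la * lb‖
        ≤ (n : ℝ) * (‖a n‖ * ‖b n - lb‖ + ‖a n - la‖ * ‖lb‖) :=
          mul_le_mul_of_nonneg_left (norm_mul_sub_mul_le _ _ _ _) n.cast_nonneg
      _ = ‖a n‖ * ((n : ℝ) * ‖b n - lb‖) + ((n : ℝ) * ‖a n - la‖) * ‖lb‖ := by ring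
      _ ≤ Sa * Wb + Wa * Sb :=
          add_le_add
            (mul_le_mul (ha.norm_le_iSup n) (hb.weighted_le_iSup n) (by positivity) hSa)
            (mul_le_mul (ha.weighted_le_iSup n) hb.norm_lim_le_iSup (norm_nonneg _) hWa)
  calc nrm (fun n => a n * b n) (la * lb) ≤ Sa * Sb + (Sa * Wb + Wa * Sb) :=
        nrm_le_of_forall_le hsup hweighted
    _ ≤ (Sa + Wa) * (Sb + Wb) := by nlinarith [mul_nonneg hWa hWb]

theorem nrm_conj (a : ℕ → ℂ) (la : ℂ) :
    nrm (fun n => starRingEnd ℂ (a n)) (starRingEnd ℂ la) = nrm a la := by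
  simp only [nrm, ← map_sub, Complex.norm_conj]

theorem nrm_one : nrm (fun _ => 1) 1 = 1 := by
  simp [nrm]

/-- `‖·‖` is submultiplicative on `B₀`, `‖a*‖ = ‖a‖`, and `‖1‖ = 1`. -/
theorem nrm_submult_star_one :
    (∀ (a b : ℕ → ℂ) (la lb : ℂ), MemB0 a la → MemB0 b lb →
      nrm (fun n => a n * b n) (la * lb) ≤ nrm a la * nrm b lb) ∧
    (∀ (a : ℕ → ℂ) (la : ℂ), MemB0 a la →
      nrm (fun n => starRingEnd ℂ (a n)) (starRingEnd ℂ la) = nrm a la) ∧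
    nrm (fun _ => 1) 1 = 1 :=
  ⟨fun _ _ _ _ ha hb => nrm_mul_le ha hb, fun a la _ => nrm_conj a la, nrm_one⟩
end

section
/- The invertible elements of B₀ are dense in B₀ with respect to the norm ‖a‖ = ‖a‖_∞ + ‖a‖_ω, and the invertible selfadjoint (real-valued) elements are dense in the set of selfadjoint elements. -/
open Filter Topology

/-!
Shifting `a` by a real constant `t` moves it by exactly `|t|` in the norm (the `ω`-part of a
constant vanishes) and keeps it real-valued if `a` is. Only countably many `t` make some `a n + t`
or `λ(a) + t` vanish, so a suitable `t ∈ (0, ε)` exists; then `a + t` is invertible, since the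
pointwise inverse of a nowhere-vanishing element of `B₀` with nonzero limit is again in `B₀`.
-/

lemma Set.Countable.exists_real_mem_Ioo_forall_add_ne_zero {s : Set ℂ} (hs : s.Countable)
    {ε : ℝ} (hε : 0 < ε) : ∃ t : ℝ, t ∈ Set.Ioo 0 ε ∧ ∀ z ∈ s, z + t ≠ 0 := by
  have hinj : Function.Injective (fun x : ℝ => -(x : ℂ)) := fun x y h => by simpa using h
  obtain ⟨t, ht_notMem, ht⟩ := ((hs.preimage hinj).dense_compl ℝ).exists_mem_open isOpen_Ioo
    (Set.nonempty_Ioo.2 hε)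
  exact ⟨t, ht, fun z hz hzt => ht_notMem (by simpa [eq_neg_of_add_eq_zero_left hzt] using hz)⟩

namespace MemB0

variable {a : ℕ → ℂ} {la : ℂ}

lemma add_const (h : MemB0 a la) (c : ℂ) : MemB0 (fun n => a n + c) (la + c) := by
  obtain ⟨ha, w, hw⟩ := h
  exact ⟨ha.add_const c, w, by simpa using hw⟩

/- `n (1/aₙ - 1/λ) = -n (aₙ - λ) / (aₙ λ)`, and `aₙ λ → λ²`. -/
lemma inv (h : MemB0 a la) (ha : ∀ n, a n ≠ 0) (hla : la ≠ 0) :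
    MemB0 (fun n => (a n)⁻¹) la⁻¹ := by
  obtain ⟨hlim, w, hw⟩ := h
  refine ⟨hlim.inv₀ hla, -(w / (la * la)), ?_⟩
  have hprod : Tendsto (fun n => a n * la) atTop (𝓝 (la * la)) := hlim.mul_const la
  refine ((hw.div hprod (mul_ne_zero hla hla)).neg).congr fun n => ?_
  simp only [Pi.div_apply]
  field_simp [ha n, hla]
  ring

lemma exists_real_shift_invertible (h : MemB0 a la) {ε : ℝ} (hε : 0 < ε) :
    ∃ t : ℝ, t ∈ Set.Ioo 0 ε ∧
      ∃ (c : ℕ → ℂ) (lc : ℂ), MemB0 c lc ∧ ∀ n, (a n + t) * c n = 1 := by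
  obtain ⟨t, ht, hne⟩ :=
    ((Set.countable_range a).insert la).exists_real_mem_Ioo_forall_add_ne_zero hε
  have han (n : ℕ) : a n + t ≠ 0 := hne _ (Set.mem_insert_of_mem _ ⟨n, rfl⟩)
  have hla : la + t ≠ 0 := hne _ (Set.mem_insert _ _)
  exact ⟨t, ht, _, _, (h.add_const t).inv han hla, fun n => mul_inv_cancel₀ (han n)⟩

end MemB0

lemma nrm_sub_add_const (a : ℕ → ℂ) (la c : ℂ) :
    nrm (fun n => a n - (a n + c)) (la - (la + c)) = ‖c‖ := by
  simp [nrm]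

/-- the invertible elements of `B₀` are dense in `B₀` for the norm
`‖a‖ = ‖a‖_∞ + ‖a‖_ω`, and the invertible selfadjoint (real-valued) elements are
dense in the set of selfadjoint elements. -/
theorem B0_invertibles_dense :
    (∀ (a : ℕ → ℂ) (la : ℂ), MemB0 a la → ∀ ε : ℝ, 0 < ε →
      ∃ (b : ℕ → ℂ) (lb : ℂ), MemB0 b lb ∧
        (∃ (c : ℕ → ℂ) (lc : ℂ), MemB0 c lc ∧ ∀ n, b n * c n = 1) ∧
        nrm (fun n => a n - b n) (la - lb) < ε) ∧
    (∀ (a : ℕ → ℂ) (la : ℂ), MemB0 a la → (∀ n, (a n).im = 0) → ∀ ε : ℝ, 0 < ε →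
      ∃ (b : ℕ → ℂ) (lb : ℂ), MemB0 b lb ∧ (∀ n, (b n).im = 0) ∧
        (∃ (c : ℕ → ℂ) (lc : ℂ), MemB0 c lc ∧ ∀ n, b n * c n = 1) ∧
        nrm (fun n => a n - b n) (la - lb) < ε) := by
  have hshift {ε : ℝ} (t : ℝ) (ht : t ∈ Set.Ioo 0 ε) (a : ℕ → ℂ) (la : ℂ) :
      nrm (fun n => a n - (a n + t)) (la - (la + t)) < ε := by
    rw [nrm_sub_add_const, Complex.norm_real, Real.norm_of_nonneg ht.1.le]
    exact ht.2
  refine ⟨fun a la ha ε hε => ?_, fun a la ha him ε hε => ?_⟩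
  · obtain ⟨t, ht, hinv⟩ := ha.exists_real_shift_invertible hε
    exact ⟨_, _, ha.add_const t, hinv, hshift t ht a la⟩
  · obtain ⟨t, ht, hinv⟩ := ha.exists_real_shift_invertible hε
    exact ⟨_, _, ha.add_const t, fun n => by simp [him n], hinv, hshift t ht a la⟩
end

section
/- Selfadjoint elements of B₀ with finite spectrum (i.e., real-valued sequences with finite range) are not dense in the set of selfadjoint elements of B₀: for the sequence a(n) = 1/n, every real-valued b ∈ B₀ with finite range satisfies ‖b − a‖ ≥ 1, where ‖x‖ = ‖x‖_∞ + sup_n n·|x(n) − λ(x)|. -/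
open Filter Topology

/-! A real sequence with finite range that converges is eventually equal to its limit `λ`.
Then `b n - 1/n - λ = -1/n` for large `n`, so the weighted part of `‖b - a‖` already
reaches `n · (1/n) = 1`. -/

theorem Filter.Tendsto.eventually_eq_of_finite_range {α X : Type*} [TopologicalSpace X]
    [T1Space X] {l : Filter α} {u : α → X} {x : X} (hu : Tendsto u l (𝓝 x))
    (hfin : (Set.range u).Finite) : ∀ᶠ a in l, u a = x := by
  have hnhds : (Set.range u \ {x})ᶜ ∈ 𝓝 x :=
    hfin.sdiff.isClosed.isOpen_compl.mem_nhds (by simp)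
  filter_upwards [hu hnhds] with a ha
  by_contra hne
  exact ha ⟨Set.mem_range_self a, hne⟩

theorem one_le_iSup_mul_abs_sub_one_div_sub {b : ℕ → ℝ} {c : ℝ}
    (hb : ∀ᶠ n in atTop, b n = c) : 1 ≤ ⨆ n : ℕ, (n : ℝ) * |b n - 1 / n - c| := by
  have hone : ∀ᶠ n : ℕ in atTop, (n : ℝ) * |b n - 1 / n - c| = 1 := by
    filter_upwards [hb, eventually_ge_atTop 1] with n hbn hn
    have hn' : (0 : ℝ) < n := by exact_mod_cast hn
    rw [hbn, sub_sub_cancel_left, abs_neg, abs_of_pos (one_div_pos.mpr hn'),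
      mul_one_div_cancel hn'.ne']
  have hbdd : BddAbove (Set.range fun n : ℕ ↦ (n : ℝ) * |b n - 1 / n - c|) :=
    (tendsto_const_nhds.congr' (hone.mono fun _ h ↦ h.symm)).bddAbove_range
  obtain ⟨n, hn⟩ := hone.exists
  exact hn.symm.le.trans (le_ciSup hbdd n)

theorem B0_finite_spectrum_not_dense_general (b : ℕ → ℝ) (lb : ℝ)
    (hb : Tendsto b atTop (𝓝 lb))
    (hfin : (Set.range b).Finite) :
    1 ≤ (⨆ n : ℕ, |b n - 1 / (n : ℝ)|)
        + ⨆ n : ℕ, (n : ℝ) * |b n - 1 / (n : ℝ) - lb| := by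
  have hweighted := one_le_iSup_mul_abs_sub_one_div_sub (hb.eventually_eq_of_finite_range hfin)
  have hsup : 0 ≤ ⨆ n : ℕ, |b n - 1 / (n : ℝ)| := Real.iSup_nonneg fun _ ↦ abs_nonneg _
  linarith

/-- selfadjoint elements of `B₀` with finite spectrum (real-valued sequences
with finite range) are not dense in the selfadjoint part of `B₀`: for `a(n) = 1/n`,
every real-valued `b ∈ B₀` with finite range has `‖b - a‖ ≥ 1`, where
`‖x‖ = ‖x‖_∞ + sup_n n |x(n) - λ(x)|` (here `λ(b - a) = lb - 0 = lb`). -/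
theorem B0_finite_spectrum_not_dense (b : ℕ → ℝ) (lb wb : ℝ)
    (hb : Tendsto b atTop (𝓝 lb))
    (hwb : Tendsto (fun n : ℕ => (n : ℝ) * (b n - lb)) atTop (𝓝 wb))
    (hfin : (Set.range b).Finite) :
    1 ≤ (⨆ n : ℕ, |b n - 1 / (n : ℝ)|)
        + ⨆ n : ℕ, (n : ℝ) * |b n - 1 / (n : ℝ) - lb| :=
  B0_finite_spectrum_not_dense_general b lb hb hfin
end

section
/- Let θ ∈ ℝ and let r̃: ℝ → ℝ be a smooth ℤ-periodic function. Define h̃: ℝ² → ℝ² by h̃(x,y) = (x + θ, y + x + r̃(x)). Then for all n ≥ 0, h̃ⁿ(x,y) = (x + nθ, y + nx + n(n−1)θ/2 + Σ_{k=0}^{n−1} r̃(x + kθ)). Consequently, for each m ≥ 1 the partial derivative D₁^m of the second component of h̃ⁿ is bounded by n·(1 + ‖r̃'‖_∞) when m = 1 and by n·‖r̃^{(m)}‖_∞ when m ≥ 2, so all partial derivatives of h̃ⁿ grow at most linearly in n. -/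
open Filter Topology

private lemma ftp_iterZero (k : ℕ) : iteratedDeriv k (fun _ : ℝ => (0:ℝ)) = 0 := by
  induction k with
  | zero => funext x; simp [iteratedDeriv_zero]
  | succ k ih =>
    rw [iteratedDeriv_succ']
    have h3 : deriv (fun _ : ℝ => (0:ℝ)) = fun _ => (0:ℝ) := by
      funext x; exact (hasDerivAt_const x (0:ℝ)).deriv
    rw [h3]; exact ih

private lemma ftp_iterSum {ι : Type*} (s : Finset ι) (f : ι → ℝ → ℝ)
    (hf : ∀ i ∈ s, ContDiff ℝ (⊤ : ℕ∞) (f i)) (m : ℕ) (x : ℝ) :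
    iteratedDeriv m (fun x => ∑ i ∈ s, f i x) x = ∑ i ∈ s, iteratedDeriv m (f i) x := by
  have h := iteratedFDeriv_sum (𝕜 := ℝ) (f := f) (u := s) (i := m)
    (fun j hj => (hf j hj).of_le (by exact_mod_cast le_top))
  simp only [iteratedDeriv_eq_iteratedFDeriv]
  rw [show (fun x => ∑ i ∈ s, f i x) = (∑ j ∈ s, f j ·) from rfl, h]
  simp

private lemma ftp_affine (a b c : ℝ) (m : ℕ) (hm : 2 ≤ m) :
    iteratedDeriv m (fun x : ℝ => a + b * x + c) = 0 := by
  obtain ⟨k, rfl⟩ : ∃ k, m = k + 2 := ⟨m - 2, by omega⟩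
  rw [iteratedDeriv_succ', iteratedDeriv_succ']
  have h1 : deriv (fun x : ℝ => a + b * x + c) = fun _ => b := by
    funext x
    exact (by simpa using (((hasDerivAt_id x).const_mul b).const_add a).add_const c :
      HasDerivAt (fun x : ℝ => a + b * x + c) b x).deriv
  rw [h1]
  have h2 : deriv (fun _ : ℝ => b) = fun _ => (0:ℝ) := by
    funext x; exact (hasDerivAt_const x b).deriv
  rw [h2]
  exact ftp_iterZero k

private lemma ftp_periodic_bdd (g : ℝ → ℝ) (hg : Continuous g)
    (hper : ∀ x, g (x + 1) = g x) : BddAbove (Set.range fun t => |g t|) := by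
  have hp : Function.Periodic (fun t => |g t|) 1 := fun x => by simp [hper x]
  have hb := hp.isBounded_of_continuous one_ne_zero hg.abs
  obtain ⟨R, hR⟩ := (Metric.isBounded_iff_subset_closedBall 0).1 hb
  refine ⟨R, fun y hy => ?_⟩
  obtain ⟨t, rfl⟩ := hy
  have := hR (Set.mem_range_self t)
  rw [Metric.mem_closedBall, Real.dist_eq, sub_zero] at this
  exact (abs_le.1 this).2

/-- for the Furstenberg-type map `h̃(x,y) = (x + θ, y + x + r̃(x))` with `r̃`
smooth and `ℤ`-periodic, one has
`h̃ⁿ(x,y) = (x + nθ, y + nx + n(n-1)θ/2 + Σ_{k<n} r̃(x + kθ))`, and the partial derivatives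
`D₁^m` of the second component of `h̃ⁿ` are bounded by `n(1 + ‖r̃'‖_∞)` for `m = 1` and by
`n ‖r̃^{(m)}‖_∞` for `m ≥ 2`; so all partial derivatives grow at most linearly in `n`. -/
theorem furstenberg_tempered (θ : ℝ) (r : ℝ → ℝ)
    (hr : ContDiff ℝ (⊤ : ℕ∞) r) (hper : ∀ x, r (x + 1) = r x)
    (h : ℝ × ℝ → ℝ × ℝ) (hh : ∀ p, h p = (p.1 + θ, p.2 + p.1 + r p.1)) :
    (∀ (n : ℕ) (x y : ℝ),
      h^[n] (x, y) = (x + n * θ,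
        y + n * x + n * (n - 1) * θ / 2 + ∑ k ∈ Finset.range n, r (x + k * θ))) ∧
    (∀ (n : ℕ) (y x : ℝ),
      |deriv (fun x => (h^[n] (x, y)).2) x| ≤ n * (1 + ⨆ t : ℝ, |deriv r t|)) ∧
    (∀ m : ℕ, 2 ≤ m → ∀ (n : ℕ) (y x : ℝ),
      |iteratedDeriv m (fun x => (h^[n] (x, y)).2) x| ≤ n * ⨆ t : ℝ, |iteratedDeriv m r t|) := by
  have key : ∀ (n : ℕ) (x y : ℝ),
      h^[n] (x, y) = (x + n * θ,
        y + n * x + n * (n - 1) * θ / 2 + ∑ k ∈ Finset.range n, r (x + k * θ)) := by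
    intro n
    induction n with
    | zero => intro x y; simp
    | succ n ih =>
      intro x y
      rw [Function.iterate_succ_apply', ih, hh]
      simp only [Finset.sum_range_succ, Prod.mk.injEq]
      constructor
      · push_cast; ring
      · push_cast; ring
  have comp2 : ∀ (n : ℕ) (y : ℝ), (fun x => (h^[n] (x, y)).2) =
      fun x => y + n * x + n * (n - 1) * θ / 2 + ∑ k ∈ Finset.range n, r (x + k * θ) := by
    intro n y; funext x; rw [key n x y]
  refine ⟨key, ?_, ?_⟩
  · -- first derivative
    intro n y x
    have hbdd : BddAbove (Set.range fun t => |deriv r t|) := by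
      refine ftp_periodic_bdd _ (hr.continuous_deriv (by simp)) ?_
      intro t
      have h1 := deriv_comp_add_const r 1 t
      rw [show (fun x => r (x + 1)) = r from funext hper] at h1
      exact h1.symm
    set S := ⨆ t : ℝ, |deriv r t| with hS
    have hterm : ∀ k : ℕ, HasDerivAt (fun x => r (x + k * θ)) (deriv r (x + k * θ)) x :=
      fun k => (((hr.differentiable (by simp)) (x + k * θ)).hasDerivAt).comp_add_const x (k * θ)
    have hda : HasDerivAt (fun x => y + n * x + n * (n - 1) * θ / 2 +
        ∑ k ∈ Finset.range n, r (x + k * θ))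
        ((n : ℝ) + ∑ k ∈ Finset.range n, deriv r (x + k * θ)) x := by
      have h1 : HasDerivAt (fun x : ℝ => y + n * x + n * (n - 1) * θ / 2) (n : ℝ) x := by
        simpa using (((hasDerivAt_id x).const_mul (n : ℝ)).const_add y).add_const
          ((n : ℝ) * ((n : ℝ) - 1) * θ / 2)
      exact h1.add (HasDerivAt.fun_sum fun k _ => hterm k)
    rw [comp2, hda.deriv]
    calc |(n : ℝ) + ∑ k ∈ Finset.range n, deriv r (x + k * θ)|
        ≤ (n : ℝ) + ∑ k ∈ Finset.range n, |deriv r (x + k * θ)| := by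
          refine (abs_add_le _ _).trans ?_
          gcongr
          · simp
          · exact Finset.abs_sum_le_sum_abs _ _
      _ ≤ (n : ℝ) + ∑ k ∈ Finset.range n, S := by
          gcongr with k hk
          exact le_ciSup hbdd (x + k * θ)
      _ = n * (1 + S) := by rw [Finset.sum_const, Finset.card_range]; ring
  · -- higher derivatives
    intro m hm n y x
    have hiper : ∀ t, iteratedDeriv m r (t + 1) = iteratedDeriv m r t := by
      intro t
      have h1 := congrFun (iteratedDeriv_comp_add_const m r 1) t
      rw [show (fun z => r (z + 1)) = r from funext hper] at h1
      exact h1.symm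
    have hbdd : BddAbove (Set.range fun t => |iteratedDeriv m r t|) :=
      ftp_periodic_bdd _ (hr.continuous_iteratedDeriv m (by exact_mod_cast le_top)) hiper
    set S := ⨆ t : ℝ, |iteratedDeriv m r t| with hS
    rw [comp2]
    have hF : ContDiff ℝ (⊤ : ℕ∞) (fun x : ℝ => y + (n : ℝ) * x + (n : ℝ) * ((n : ℝ) - 1) * θ / 2) := by
      fun_prop
    have hGk : ∀ k : ℕ, ContDiff ℝ (⊤ : ℕ∞) (fun x : ℝ => r (x + (k : ℝ) * θ)) :=
      fun k => hr.comp (contDiff_id.add contDiff_const)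
    have hG : ContDiff ℝ (⊤ : ℕ∞) (fun x : ℝ => ∑ k ∈ Finset.range n, r (x + (k : ℝ) * θ)) :=
      ContDiff.sum fun k _ => hGk k
    have hadd : iteratedDeriv m (fun x => y + (n : ℝ) * x + (n : ℝ) * ((n : ℝ) - 1) * θ / 2 +
        ∑ k ∈ Finset.range n, r (x + (k : ℝ) * θ)) x =
        iteratedDeriv m (fun x => y + (n : ℝ) * x + (n : ℝ) * ((n : ℝ) - 1) * θ / 2) x +
        iteratedDeriv m (fun x => ∑ k ∈ Finset.range n, r (x + (k : ℝ) * θ)) x := by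
      simp only [← iteratedDerivWithin_univ]
      exact iteratedDerivWithin_add (Set.mem_univ x) uniqueDiffOn_univ
        ((hF.of_le (by exact_mod_cast le_top)).contDiffWithinAt) ((hG.of_le (by exact_mod_cast le_top)).contDiffWithinAt)
    rw [hadd, congrFun (ftp_affine y (n : ℝ) ((n : ℝ) * ((n : ℝ) - 1) * θ / 2) m hm) x,
      ftp_iterSum (Finset.range n) _ (fun k _ => hGk k) m x]
    have hcomp : ∀ k : ℕ, iteratedDeriv m (fun x : ℝ => r (x + (k : ℝ) * θ)) x =
        iteratedDeriv m r (x + (k : ℝ) * θ) :=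
      fun k => congrFun (iteratedDeriv_comp_add_const m r ((k : ℝ) * θ)) x
    simp only [Pi.zero_apply, zero_add]
    calc |∑ k ∈ Finset.range n, iteratedDeriv m (fun x : ℝ => r (x + (k : ℝ) * θ)) x|
        ≤ ∑ k ∈ Finset.range n, |iteratedDeriv m (fun x : ℝ => r (x + (k : ℝ) * θ)) x| :=
          Finset.abs_sum_le_sum_abs _ _
      _ ≤ ∑ k ∈ Finset.range n, S := by
          refine Finset.sum_le_sum fun k _ => ?_
          rw [hcomp k]
          exact le_ciSup hbdd (x + (k : ℝ) * θ)
      _ = n * S := by rw [Finset.sum_const, Finset.card_range]; ring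
end

section
/- The matrices A = [[1,m,0],[0,1,n],[0,0,1]] and B = [[1,n,0],[0,1,m],[0,0,1]] with integers 0 < m < n are similar over ℚ but A is not similar over ℤ to B. -/
open Matrix

/-- for integers `0 < m < n`, the unipotent matrices
`A = [[1,m,0],[0,1,n],[0,0,1]]` and `B = [[1,n,0],[0,1,m],[0,0,1]]` are similar over `ℚ`
but not similar over `ℤ`. (Similarity of `A` and `B` over `R` via an invertible `P`, i.e.
`P A P⁻¹ = B`, is expressed as `P A = B P` with `P.det` a unit.) -/
theorem similar_over_Q_not_over_Z (m n : ℤ) (h0 : 0 < m) (hmn : m < n) :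
    (∃ P : Matrix (Fin 3) (Fin 3) ℚ, IsUnit P.det ∧
      P * !![1, (m : ℚ), 0; 0, 1, (n : ℚ); 0, 0, 1]
        = !![1, (n : ℚ), 0; 0, 1, (m : ℚ); 0, 0, 1] * P) ∧
    ¬ ∃ P : Matrix (Fin 3) (Fin 3) ℤ, IsUnit P.det ∧
      P * !![1, m, 0; 0, 1, n; 0, 0, 1] = !![1, n, 0; 0, 1, m; 0, 0, 1] * P := by
  have hm : (m : ℚ) ≠ 0 := by exact_mod_cast h0.ne'
  have hn0 : 0 < n := h0.trans hmn
  have hn : (n : ℚ) ≠ 0 := by exact_mod_cast hn0.ne'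
  constructor
  · refine ⟨!![(n : ℚ), 0, 0; 0, (m : ℚ), 0; 0, 0, (n : ℚ)], ?_, ?_⟩
    · have hd : (!![(n : ℚ), 0, 0; 0, (m : ℚ), 0; 0, 0, (n : ℚ)]).det = n * m * n := by
        simp [Matrix.det_fin_three]
      rw [hd, isUnit_iff_ne_zero]
      exact mul_ne_zero (mul_ne_zero hn hm) hn
    · ext i j
      fin_cases i <;> fin_cases j <;>
        simp [Matrix.mul_apply, Fin.sum_univ_three, Matrix.vecHead, Matrix.vecTail]
  · rintro ⟨P, hdet, hP⟩
    have h := fun i j => congrFun (congrFun hP i) j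
    have h00 := h 0 0
    have h10 := h 1 0
    have h01 := h 0 1
    have h11 := h 1 1
    have h21 := h 2 1
    have h12 := h 1 2
    simp [Matrix.mul_apply, Fin.sum_univ_three, Matrix.vecHead, Matrix.vecTail]
      at h00 h10 h01 h11 h21 h12
    have hmne : m ≠ 0 := h0.ne'
    have hnne : n ≠ 0 := (h0.trans hmn).ne'
    have hp10 : P 1 0 = 0 := h00.resolve_left hnne
    have hp20 : P 2 0 = 0 := h10.resolve_left hmne
    have hp21 : P 2 1 = 0 := by
      rw [hp10] at h11
      have : m * P 2 1 = 0 := by linarith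
      exact (mul_eq_zero.mp this).resolve_left hmne
    have e1 : m * P 0 0 = n * P 1 1 := by linear_combination h01
    have e2 : n * P 1 1 = m * P 2 2 := by linear_combination h12
    rw [Matrix.det_fin_three, hp10, hp20, hp21] at hdet
    have hdet' : IsUnit (P 0 0 * (P 1 1 * P 2 2)) := by
      convert hdet using 1; ring
    have hu0 : IsUnit (P 0 0) := isUnit_of_mul_isUnit_left hdet'
    have hu1 : IsUnit (P 1 1) := isUnit_of_mul_isUnit_left
      (isUnit_of_mul_isUnit_right hdet')
    rcases Int.isUnit_iff.mp hu0 with h0' | h0' <;>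
      rcases Int.isUnit_iff.mp hu1 with h1' | h1' <;>
      rw [h0', h1'] at e1 <;> omega
end

section
/- For integers 0 < m < n, the matrix A = [[1,m,0],[0,1,n],[0,0,1]] is not similar over ℤ to the inverse B⁻¹ of B = [[1,n,0],[0,1,m],[0,0,1]]. -/
open Matrix

/-- for integers `0 < m < n`, `A = [[1,m,0],[0,1,n],[0,0,1]]` is not similar
over `ℤ` to `B⁻¹ = [[1,-n,nm],[0,1,-m],[0,0,1]]`, the inverse of
`B = [[1,n,0],[0,1,m],[0,0,1]]`. -/
theorem not_similar_to_inverse_over_Z (m n : ℤ) (h0 : 0 < m) (hmn : m < n) :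
    ¬ ∃ P : Matrix (Fin 3) (Fin 3) ℤ, IsUnit P.det ∧
      P * !![1, m, 0; 0, 1, n; 0, 0, 1] = !![1, -n, n * m; 0, 1, -m; 0, 0, 1] * P := by
  rintro ⟨P, hdet, hPA⟩
  have e : ∀ i j, (P * !![1, m, 0; 0, 1, n; 0, 0, 1]) i j
      = (!![1, -n, n * m; 0, 1, -m; 0, 0, 1] * P) i j := fun i j => by rw [hPA]
  have h10 := e 1 0
  have h00 := e 0 0
  have h11 := e 1 1
  have h01 := e 0 1
  have h12 := e 1 2
  simp [Matrix.mul_apply, Fin.sum_univ_three, Matrix.vecHead, Matrix.vecTail] at h10 h00 h11 h01 h12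
  have h20 : P 2 0 = 0 := h10.resolve_left (by omega)
  rw [h20, mul_zero] at h00
  have h10' : P 1 0 = 0 := by
    have hn : n * P 1 0 = 0 := by linarith
    exact (mul_eq_zero.mp hn).resolve_left (by omega)
  rw [h10'] at h11
  have h21 : P 2 1 = 0 := by
    have hm : m * P 2 1 = 0 := by linarith
    exact (mul_eq_zero.mp hm).resolve_left (by omega)
  rw [h21, mul_zero] at h01
  have key : m * P 0 0 = -(n * P 1 1) := by linarith
  -- key2 : n * P 1 1 = -(m * P 2 2)
  have key2 : n * P 1 1 = -(m * P 2 2) := by linarith [h12]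
  rw [Matrix.det_fin_three, h20, h10', h21] at hdet
  simp [mul_comm] at hdet
  -- hdet : IsUnit (P 0 0 * (P 1 1 * P 2 2)) or similar
  obtain ⟨⟨hu0, hu1⟩, _⟩ := hdet
  rw [Int.isUnit_iff] at hu0 hu1
  rcases hu0 with h0' | h0' <;> rcases hu1 with h1' | h1' <;> rw [h0', h1'] at key <;> omega
end

section
/- If h: X₁ → X₁ is a minimal homeomorphism of a compact Hausdorff space X₁, k: Y → Y is a homeomorphism of a compact Hausdorff space Y, and π: Y → X₁ is a continuous surjection with π ∘ k = h ∘ π, and there is a dense subset S ⊆ Y on which π is injective such that π(S) ∩ π(Y \ S) = ∅, then k is minimal. -/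
/-- A self-map of a topological space is minimal if its only closed invariant subsets are
`∅` and the whole space. -/
def IsMinimal {Y : Type*} [TopologicalSpace Y] (k : Y → Y) : Prop :=
  ∀ Z : Set Y, IsClosed Z → k '' Z = Z → Z = ∅ ∨ Z = Set.univ

/-- if `k` is an extension of a minimal homeomorphism `h` via a continuous
surjection `π` which is injective on a dense set `Y \ T` with `π(Y \ T) ∩ π(T) = ∅`,
then `k` is minimal. -/
theorem minimality_of_almost_one_to_one_extension {X Y : Type*}
    [TopologicalSpace X] [CompactSpace X] [T2Space X]
    [TopologicalSpace Y] [CompactSpace Y] [T2Space Y]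
    (h : X ≃ₜ X) (k : Y ≃ₜ Y) (π : Y → X)
    (hπc : Continuous π) (hπs : Function.Surjective π)
    (hint : ∀ y, π (k y) = h (π y))
    (T : Set Y) (hdense : Dense Tᶜ) (hinj : Set.InjOn π Tᶜ)
    (hsep : π '' Tᶜ ∩ π '' T = ∅)
    (hmin : IsMinimal h) : IsMinimal k := by
  intro Z hZc hZinv
  rcases Z.eq_empty_or_nonempty with rfl | hne
  · exact Or.inl rfl
  right
  -- π '' Z is closed, h-invariant, nonempty
  have hπZc : IsClosed (π '' Z) := (hZc.isCompact.image hπc).isClosed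
  have hπZinv : h '' (π '' Z) = π '' Z := by
    calc h '' (π '' Z) = π '' (k '' Z) := by
          rw [Set.image_image, Set.image_image]
          exact Set.image_congr fun y _ => (hint y).symm
      _ = π '' Z := by rw [hZinv]
  have hπZ : π '' Z = Set.univ := by
    rcases hmin _ hπZc hπZinv with h0 | hu
    · exact absurd h0 (Set.Nonempty.ne_empty (hne.image π))
    · exact hu
  -- Tᶜ ⊆ Z
  have hsub : Tᶜ ⊆ Z := by
    intro y hy
    have : π y ∈ π '' Z := hπZ ▸ Set.mem_univ _
    rcases this with ⟨z, hzZ, hzy⟩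
    by_cases hzT : z ∈ T
    · exfalso
      have : π y ∈ π '' Tᶜ ∩ π '' T := ⟨⟨y, hy, rfl⟩, ⟨z, hzT, hzy⟩⟩
      rw [hsep] at this; exact this
    · have := hinj hzT hy hzy
      rwa [← this]
  have : Dense Z := hdense.mono hsub
  exact hZc.closure_eq ▸ this.closure_eq
end
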